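/- For every t ∈ (0,1): √t · ∫_t^1 ( √(a−t) / (a √(1−a)) ) da + ∫_t^1 ( arcsin √(t/a) / √(1−a) ) da = π · ( √(1−t) + 2√t − t − 1 ). -/

import Mathlib

/-!
The combined integrand `√t · √(a-t)/(a√(1-a)) + arcsin √(t/a)/√(1-a)` has an elementary primitive
`G`, a combination of three arcsines, continuous on `[t, 1]`; at the endpoints every arcsine
argument is `±1` (or its coefficient `√(1-a)` vanishes), which gives `G 1 - G t`. Both integrands
are nonnegative, so integrability of the improper integrals comes for free from the fundamental
theorem of calculus for nonnegative derivatives.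
-/

open MeasureTheory Real Set

theorem integral_Ioo_add_eq_sub_of_hasDerivAt_of_nonneg {f g F : ℝ → ℝ} {a b : ℝ} (hab : a ≤ b)
    (hF : ContinuousOn F (Icc a b)) (hderiv : ∀ x ∈ Ioo a b, HasDerivAt F (f x + g x) x)
    (hf : ∀ x ∈ Ioo a b, 0 ≤ f x) (hg : ∀ x ∈ Ioo a b, 0 ≤ g x)
    (hgm : AEStronglyMeasurable g (volume.restrict (Ioo a b))) :
    (∫ x in Ioo a b, f x) + ∫ x in Ioo a b, g x = F b - F a := by
  have hsum : IntegrableOn (fun x => f x + g x) (Ioc a b) :=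
    intervalIntegral.integrableOn_deriv_of_nonneg hF hderiv fun x hx =>
      add_nonneg (hf x hx) (hg x hx)
  have hsum' := hsum.mono_set Ioo_subset_Ioc_self
  have hgi : IntegrableOn g (Ioo a b) := by
    refine hsum'.mono' hgm ((ae_restrict_iff' measurableSet_Ioo).2 (.of_forall fun x hx => ?_))
    rw [norm_of_nonneg (hg x hx)]
    linarith [hf x hx]
  have hfi : IntegrableOn f (Ioo a b) := by
    convert hsum'.sub hgi using 1
    ext x
    simp
  rw [← integral_add hfi hgi, ← integral_Ioc_eq_integral_Ioo,
    ← intervalIntegral.integral_of_le hab]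
  exact intervalIntegral.integral_eq_sub_of_hasDerivAt_of_le hab hF hderiv
    ((intervalIntegrable_iff_integrableOn_Ioc_of_le hab).2 hsum)

theorem HasDerivAt.arcsin_of_one_sub_sq_eq_sq {u : ℝ → ℝ} {u' s x : ℝ} (hu : HasDerivAt u u' x)
    (hs : 0 < s) (hsq : 1 - u x ^ 2 = s ^ 2) :
    HasDerivAt (fun y => arcsin (u y)) (u' / s) x := by
  have hpos : 0 < 1 - u x ^ 2 := hsq ▸ pow_pos hs 2
  have h₁ : u x ≠ -1 := by rintro h; simp [h] at hpos
  have h₂ : u x ≠ 1 := by rintro h; simp [h] at hpos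
  refine ((hasDerivAt_arcsin h₁ h₂).comp x hu).congr_deriv ?_
  rw [hsq, sqrt_sq hs.le]
  ring

theorem hasDerivAt_arcsin_two_mul_sub_div {b c x : ℝ} (hbx : b < x) (hxc : x < c) :
    HasDerivAt (fun y => arcsin ((2 * y - b - c) / (c - b))) (1 / (√(c - x) * √(x - b))) x := by
  have hcb : 0 < c - b := by linarith
  have hcx : 0 < c - x := by linarith
  have hxb : 0 < x - b := by linarith
  have hu : HasDerivAt (fun y => (2 * y - b - c) / (c - b)) (2 / (c - b)) x := by
    simpa using ((((hasDerivAt_id x).const_mul 2).sub_const b).sub_const c).div_const (c - b)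
  refine (hu.arcsin_of_one_sub_sq_eq_sq (s := 2 * √(c - x) * √(x - b) / (c - b)) (by positivity)
    (by rw [div_pow, div_pow, mul_pow, mul_pow, sq_sqrt hcx.le, sq_sqrt hxb.le]; field_simp; ring)
    ).congr_deriv ?_
  field_simp

theorem hasDerivAt_arcsin_mobius {b c x : ℝ} (hb : 0 < b) (hbx : b < x) (hxc : x < c) :
    HasDerivAt (fun y => arcsin (((b + c) * y - 2 * b * c) / ((c - b) * y)))
      (√(b * c) / (x * √(c - x) * √(x - b))) x := by
  have hcb : 0 < c - b := by linarith
  have hcx : 0 < c - x := by linarith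
  have hxb : 0 < x - b := by linarith
  have hx : 0 < x := hb.trans hbx
  have hbc : 0 < b * c := mul_pos hb (hx.trans hxc)
  have hsbc : 0 < √(b * c) := sqrt_pos.2 hbc
  have hu : HasDerivAt (fun y => ((b + c) * y - 2 * b * c) / ((c - b) * y))
      (2 * b * c / ((c - b) * x ^ 2)) x := by
    have hnum := ((hasDerivAt_id x).const_mul (b + c)).sub_const (2 * b * c)
    have hden := (hasDerivAt_id x).const_mul (c - b)
    refine (hnum.div hden (by positivity)).congr_deriv ?_
    simp only [id]
    field_simp
    ring
  refine (hu.arcsin_of_one_sub_sq_eq_sq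
    (s := 2 * √(b * c) * √(c - x) * √(x - b) / ((c - b) * x)) (by positivity)
    (by simp only [div_pow, mul_pow, sq_sqrt hcx.le, sq_sqrt hxb.le, sq_sqrt hbc.le]
        field_simp; ring)).congr_deriv ?_
  have := sq_sqrt hbc.le
  field_simp
  linear_combination -this

theorem hasDerivAt_arcsin_sqrt_div {t x : ℝ} (ht : 0 < t) (htx : t < x) :
    HasDerivAt (fun y => arcsin √(t / y)) (-(√t / (2 * x * √(x - t)))) x := by
  have hx : 0 < x := ht.trans htx
  have hxt : 0 < x - t := by linarith
  have hu : HasDerivAt (fun y => √(t / y)) (-(t / x ^ 2) / (2 * √(t / x))) x := by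
    refine HasDerivAt.sqrt ?_ (by positivity)
    refine ((hasDerivAt_const x t).div (hasDerivAt_id x) hx.ne').congr_deriv ?_
    simp only [id]
    ring
  refine (hu.arcsin_of_one_sub_sq_eq_sq (s := √(x - t) / √x) (by positivity)
    (by rw [sq_sqrt (by positivity), div_pow, sq_sqrt hx.le, sq_sqrt hxt.le]; field_simp)
    ).congr_deriv ?_
  rw [sqrt_div ht.le]
  have h1 := sq_sqrt hx.le
  have h2 := sq_sqrt ht.le
  field_simp
  linear_combination x * h2 - t * h1

noncomputable def vervaatPrimitive (t a : ℝ) : ℝ :=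
  -2 * √(1 - a) * arcsin √(t / a) + 2 * √t * arcsin ((2 * a - t - 1) / (1 - t))
    - (1 + t) * arcsin (((t + 1) * a - 2 * t) / ((1 - t) * a))

theorem hasDerivAt_vervaatPrimitive {t a : ℝ} (ht : 0 < t) (hta : t < a) (ha : a < 1) :
    HasDerivAt (vervaatPrimitive t)
      (√t * (√(a - t) / (a * √(1 - a))) + arcsin √(t / a) / √(1 - a)) a := by
  have h1a : 0 < 1 - a := by linarith
  have hat : 0 < a - t := by linarith
  have ha0 : 0 < a := ht.trans hta
  have hsqrt : HasDerivAt (fun y => √(1 - y)) (-1 / (2 * √(1 - a))) a :=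
    ((hasDerivAt_id a).const_sub 1).sqrt h1a.ne'
  have hmob := hasDerivAt_arcsin_mobius ht hta ha
  simp only [mul_one] at hmob
  refine ((((hsqrt.const_mul (-2)).mul (hasDerivAt_arcsin_sqrt_div ht hta)).add
    ((hasDerivAt_arcsin_two_mul_sub_div hta ha).const_mul (2 * √t))).sub
    (hmob.const_mul (1 + t))).congr_deriv ?_
  have e1 := sq_sqrt h1a.le
  have e2 := sq_sqrt hat.le
  field_simp
  linear_combination √t * e1 - √t * e2

theorem continuousOn_vervaatPrimitive {t : ℝ} (ht : 0 < t) (ht1 : t < 1) :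
    ContinuousOn (vervaatPrimitive t) (Icc t 1) := by
  have h1t : 1 - t ≠ 0 := by linarith
  have hne : ∀ x ∈ Icc t 1, x ≠ 0 := fun x hx => (ht.trans_le hx.1).ne'
  have hne' : ∀ x ∈ Icc t 1, (1 - t) * x ≠ 0 := fun x hx => mul_ne_zero h1t (hne x hx)
  unfold vervaatPrimitive
  fun_prop (disch := assumption)

theorem vervaatPrimitive_one_sub_self {t : ℝ} (ht : 0 < t) (ht1 : t < 1) :
    vervaatPrimitive t 1 - vervaatPrimitive t t = π * (√(1 - t) + 2 * √t - t - 1) := by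
  have h1t : 1 - t ≠ 0 := by linarith
  have e1 : (2 * 1 - t - 1) / (1 - t) = 1 := by rw [div_eq_one_iff_eq h1t]; ring
  have e2 : ((t + 1) * 1 - 2 * t) / ((1 - t) * 1) = 1 := by
    rw [div_eq_one_iff_eq (by simpa using h1t)]; ring
  have e3 : (2 * t - t - 1) / (1 - t) = -1 := by rw [div_eq_iff h1t]; ring
  have e4 : ((t + 1) * t - 2 * t) / ((1 - t) * t) = -1 := by
    rw [div_eq_iff (mul_ne_zero h1t ht.ne')]; ring
  simp only [vervaatPrimitive, e1, e2, e3, e4, div_self ht.ne', sqrt_one, arcsin_one,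
    arcsin_neg_one, sub_self, sqrt_zero]
  ring

theorem vervaat_expectation_integrals (t : ℝ) (ht : t ∈ Set.Ioo (0 : ℝ) 1) :
    Real.sqrt t * (∫ a in Set.Ioo t 1, Real.sqrt (a - t) / (a * Real.sqrt (1 - a))) +
      (∫ a in Set.Ioo t 1, Real.arcsin (Real.sqrt (t / a)) / Real.sqrt (1 - a)) =
      π * (Real.sqrt (1 - t) + 2 * Real.sqrt t - t - 1) := by
  obtain ⟨ht0, ht1⟩ := ht
  rw [← integral_const_mul, ← vervaatPrimitive_one_sub_self ht0 ht1]
  refine integral_Ioo_add_eq_sub_of_hasDerivAt_of_nonneg ht1.le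
    (continuousOn_vervaatPrimitive ht0 ht1)
    (fun a ha => hasDerivAt_vervaatPrimitive ht0 ha.1 ha.2) (fun a ha => ?_) (fun a ha => ?_)
    (Measurable.aestronglyMeasurable (by fun_prop))
  · have := ht0.trans ha.1
    positivity
  · exact div_nonneg (arcsin_nonneg.2 (sqrt_nonneg _)) (sqrt_nonneg _)
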